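/- Let δ > 0, A > 0, and let W : ℝ³ → [0,∞) be a continuous even function (W(-ξ) = W(ξ)) supported in the closed unit ball of ℝ³. Let v₀ : ℝ³ → [0,∞) be measurable with v₀(ξ) ≥ A·W(ξ) for all ξ, and suppose v : [0,∞) × ℝ³ → [0,∞) solves the Fourier-side cubic heat integral equation with datum v₀ (on [0,T] for every T > 0). Then for every integer k ≥ 0, every t ≥ 0 and every ξ ∈ ℝ³: v(t,ξ) ≥ A^{3^k} α_k(t) W_k(ξ). -/
import Mathlib


open MeasureTheory

noncomputable section

/-- `ℝ³` as Euclidean space. -/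
abbrev E3 := EuclideanSpace ℝ (Fin 3)

/-- Convolution of two `[0,∞]`-valued functions on `ℝ³` (lower Lebesgue integral). -/
def lconv (f g : E3 → ENNReal) : E3 → ENNReal := fun ξ => ∫⁻ y, f y * g (ξ - y)

/-- The triple convolution `f * f * f` of a `[0,∞]`-valued function on `ℝ³`. -/
def lconv3 (f : E3 → ENNReal) : E3 → ENNReal := lconv (lconv f f) f

/-- `v` solves the Fourier-side cubic heat integral equation on `[0,T]` with datum `v₀`:
for all `t ∈ [0,T]` and all `ξ`,
`v(t,ξ) = e^{-t|ξ|²} v₀(ξ) + ∫₀ᵗ e^{-(t-s)|ξ|²} (v(s,·) * v(s,·) * v(s,·))(ξ) ds`,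
all integrals being of nonnegative functions, taken in `[0,∞]`. -/
def SolvesFourierCubic (T : ℝ) (v₀ : E3 → ℝ) (v : ℝ → E3 → ℝ) : Prop :=
  ∀ t ∈ Set.Icc (0 : ℝ) T, ∀ ξ : E3,
    ENNReal.ofReal (v t ξ) =
      ENNReal.ofReal (Real.exp (-t * ‖ξ‖ ^ 2) * v₀ ξ) +
        ∫⁻ s in Set.Ioo (0 : ℝ) t,
          ENNReal.ofReal (Real.exp (-(t - s) * ‖ξ‖ ^ 2)) *
            lconv3 (fun y => ENNReal.ofReal (v s y)) ξ

/-- `c_δ = 1 - e^{-4δ}`. -/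
def cDelta (δ : ℝ) : ℝ := 1 - Real.exp (-4 * δ)

/-- `t_k = 4δ ∑_{j=1}^k 3^{-2j}` (so `t₀ = 0`). -/
def tTime (δ : ℝ) (k : ℕ) : ℝ := 4 * δ * ∑ j ∈ Finset.Icc 1 k, ((3 : ℝ) ^ (2 * j))⁻¹

/-- `α_k(t) = 3^{3/2 + k - 3^{k+1}/2} c_δ^{(3^k-1)/2} e^{-3^k t} 𝟙_{t ≥ t_k}`. -/
def alpha (δ : ℝ) (k : ℕ) (t : ℝ) : ℝ :=
  if tTime δ k ≤ t then
    (3 : ℝ) ^ ((3 : ℝ) / 2 + k - (3 : ℝ) ^ (k + 1) / 2) *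
      cDelta δ ^ (((3 : ℝ) ^ k - 1) / 2) * Real.exp (-(3 : ℝ) ^ k * t)
  else 0

/-- `W_k`, the `3^k`-fold convolution power of `W` (as a `[0,∞]`-valued function). -/
def Wpow (W : E3 → ℝ) : ℕ → E3 → ENNReal
  | 0 => fun x => ENNReal.ofReal (W x)
  | k + 1 => lconv3 (Wpow W k)

/- ### Auxiliary lemmas -/

lemma lconv_mono {f g f' g' : E3 → ENNReal} (hf : ∀ x, f x ≤ f' x) (hg : ∀ x, g x ≤ g' x) :
    ∀ ξ, lconv f g ξ ≤ lconv f' g' ξ := fun _ =>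
  lintegral_mono fun y => mul_le_mul' (hf y) (hg _)

lemma lconv3_mono {f f' : E3 → ENNReal} (hf : ∀ x, f x ≤ f' x) :
    ∀ ξ, lconv3 f ξ ≤ lconv3 f' ξ :=
  lconv_mono (lconv_mono hf hf) hf

lemma lconv_smul (c d : ENNReal) (hc : c ≠ ⊤) (hd : d ≠ ⊤) (f g : E3 → ENNReal) :
    ∀ ξ, lconv (fun x => c * f x) (fun x => d * g x) ξ = c * d * lconv f g ξ := by
  intro ξ
  unfold lconv
  rw [← lintegral_const_mul' _ _ (ENNReal.mul_ne_top hc hd)]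
  congr 1; ext y; ring

lemma lconv3_smul (c : ENNReal) (hc : c ≠ ⊤) (f : E3 → ENNReal) :
    ∀ ξ, lconv3 (fun x => c * f x) ξ = c ^ 3 * lconv3 f ξ := by
  intro ξ
  unfold lconv3
  have h2 : ∀ ξ, lconv (fun x => c * f x) (fun x => c * f x) ξ = (c * c) * lconv f f ξ :=
    lconv_smul c c hc hc f f
  have h3 := lconv_smul (c * c) c (ENNReal.mul_ne_top hc hc) hc (lconv f f) f
  calc lconv (lconv (fun x => c * f x) (fun x => c * f x)) (fun x => c * f x) ξ
      = lconv (fun x => (c*c) * lconv f f x) (fun x => c * f x) ξ := by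
        congr 1; ext x; exact h2 x
    _ = (c*c) * c * lconv (lconv f f) f ξ := h3 ξ
    _ = c ^ 3 * lconv (lconv f f) f ξ := by ring_nf

lemma lconv_eq_zero {f g : E3 → ENNReal} {r₁ r₂ : ℝ}
    (hf : ∀ y, r₁ < ‖y‖ → f y = 0) (hg : ∀ y, r₂ < ‖y‖ → g y = 0)
    {ξ : E3} (hξ : r₁ + r₂ < ‖ξ‖) : lconv f g ξ = 0 := by
  unfold lconv
  have h : ∀ y : E3, f y * g (ξ - y) = 0 := by
    intro y
    by_cases h : r₁ < ‖y‖
    · rw [hf y h, zero_mul]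
    · push_neg at h
      rw [hg (ξ - y) (by have := norm_sub_norm_le ξ y; linarith), mul_zero]
  simp only [h, lintegral_zero]

lemma lconv3_eq_zero {f : E3 → ENNReal} {r : ℝ}
    (hf : ∀ y, r < ‖y‖ → f y = 0) {ξ : E3} (hξ : 3 * r < ‖ξ‖) : lconv3 f ξ = 0 := by
  unfold lconv3
  exact lconv_eq_zero (fun y hy => lconv_eq_zero hf hf hy) hf (by linarith)

lemma integral_exp_shift (B t a : ℝ) (hB : 0 < B) (hat : a ≤ t) :
    ∫ s in a..t, Real.exp (-(t - s) * B) = (1 - Real.exp (-(t - a) * B)) / B := by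
  have hder : ∀ s ∈ Set.uIcc a t,
      HasDerivAt (fun x => Real.exp (-(t - x) * B) / B) (Real.exp (-(t - s) * B)) s := by
    intro s _
    have heq : (fun x : ℝ => -(t - x) * B) = fun x => B * x - t * B := by funext x; ring
    have h1 : HasDerivAt (fun x : ℝ => -(t - x) * B) B s := by
      rw [heq]
      simpa using ((hasDerivAt_id s).const_mul B).sub_const (t * B)
    have h3 := h1.exp.div_const B
    simpa [mul_div_assoc, mul_div_cancel_right₀ _ (ne_of_gt hB)] using h3
  have hint : IntervalIntegrable (fun s => Real.exp (-(t - s) * B)) volume a t :=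
    Continuous.intervalIntegrable (by continuity) a t
  rw [intervalIntegral.integral_eq_sub_of_hasDerivAt hder hint]
  rw [sub_self, neg_zero, zero_mul, Real.exp_zero]
  ring

lemma lint_ofReal_Ioo {a b : ℝ} (hab : a ≤ b) {h : ℝ → ℝ} (hc : Continuous h)
    (hnn : ∀ s, 0 ≤ h s) :
    ∫⁻ s in Set.Ioo a b, ENNReal.ofReal (h s) = ENNReal.ofReal (∫ s in a..b, h s) := by
  rw [intervalIntegral.integral_of_le hab, integral_Ioc_eq_integral_Ioo,
    ← ofReal_integral_eq_lintegral_ofReal]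
  · exact (hc.integrableOn_Icc (a := a) (b := b)).mono_set Set.Ioo_subset_Icc_self
  · exact Filter.Eventually.of_forall fun s => hnn s

set_option maxHeartbeats 1000000 in
theorem stmt_7 (δ A : ℝ) (hδ : 0 < δ) (hA : 0 < A)
    (W : E3 → ℝ) (hWcont : Continuous W) (hWnonneg : ∀ ξ, 0 ≤ W ξ)
    (hWeven : ∀ ξ, W (-ξ) = W ξ)
    (hWsupp : Function.support W ⊆ Metric.closedBall 0 1)
    (v₀ : E3 → ℝ) (hv₀meas : Measurable v₀) (hv₀nonneg : ∀ ξ, 0 ≤ v₀ ξ)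
    (hv₀ge : ∀ ξ, A * W ξ ≤ v₀ ξ)
    (v : ℝ → E3 → ℝ) (hvmeas : Measurable (Function.uncurry v))
    (hvnonneg : ∀ t ξ, 0 ≤ v t ξ)
    (hsol : ∀ T : ℝ, 0 < T → SolvesFourierCubic T v₀ v) :
    ∀ k : ℕ, ∀ t : ℝ, 0 ≤ t → ∀ ξ : E3,
      ENNReal.ofReal (A ^ 3 ^ k * alpha δ k t) * Wpow W k ξ ≤ ENNReal.ofReal (v t ξ) := by
  have hcd : 0 < cDelta δ := by
    unfold cDelta
    have : Real.exp (-4 * δ) < 1 := Real.exp_lt_one_iff.mpr (by linarith)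
    linarith
  have hWsupp0 : ∀ ξ : E3, (1 : ℝ) < ‖ξ‖ → W ξ = 0 := by
    intro ξ hξ
    by_contra h
    have := hWsupp h
    rw [Metric.mem_closedBall, dist_zero_right] at this
    linarith
  have hWpow_supp : ∀ k : ℕ, ∀ ξ : E3, (3 : ℝ) ^ k < ‖ξ‖ → Wpow W k ξ = 0 := by
    intro k
    induction k with
    | zero =>
      intro ξ h
      show ENNReal.ofReal (W ξ) = 0
      rw [hWsupp0 ξ (by simpa using h)]; simp
    | succ k ih =>
      intro ξ h
      exact lconv3_eq_zero ih (by rw [pow_succ] at h; linarith)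
  have htnn : ∀ k, 0 ≤ tTime δ k := by
    intro k
    unfold tTime
    have : (0:ℝ) ≤ ∑ j ∈ Finset.Icc 1 k, ((3 : ℝ) ^ (2 * j))⁻¹ :=
      Finset.sum_nonneg fun j _ => by positivity
    positivity
  have htsucc : ∀ k : ℕ, tTime δ (k + 1) = tTime δ k + 4 * δ * ((3 : ℝ) ^ (2 * (k + 1)))⁻¹ := by
    intro k
    unfold tTime
    rw [Finset.sum_Icc_succ_top (Nat.le_add_left 1 k)]
    ring
  have halpha_nonneg : ∀ k t, 0 ≤ alpha δ k t := by
    intro k t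
    unfold alpha
    split
    · have h1 : (0:ℝ) ≤ (3 : ℝ) ^ ((3 : ℝ) / 2 + k - (3 : ℝ) ^ (k + 1) / 2) :=
        Real.rpow_nonneg (by norm_num) _
      have h2 : (0:ℝ) ≤ cDelta δ ^ (((3 : ℝ) ^ k - 1) / 2) := Real.rpow_nonneg hcd.le _
      positivity
    · exact le_refl 0
  intro k
  induction k with
  | zero =>
    intro t ht ξ
    have ht0 : tTime δ 0 = 0 := by simp [tTime]
    have halpha : alpha δ 0 t = Real.exp (-t) := by
      unfold alpha
      rw [if_pos (by rw [ht0]; exact ht)]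
      norm_num
    have heq := hsol (t + 1) (by linarith) t ⟨ht, by linarith⟩ ξ
    rw [heq]
    refine le_add_right ?_
    show ENNReal.ofReal (A ^ 3 ^ 0 * alpha δ 0 t) * ENNReal.ofReal (W ξ) ≤ _
    by_cases hw : W ξ = 0
    · simp [hw]
    have hξ1 : ‖ξ‖ ≤ 1 := by
      by_contra h
      push_neg at h
      exact hw (hWsupp0 ξ h)
    rw [← ENNReal.ofReal_mul (mul_nonneg (by positivity) (halpha_nonneg 0 t))]
    apply ENNReal.ofReal_le_ofReal
    have hsq : ‖ξ‖ ^ 2 ≤ 1 := by nlinarith [norm_nonneg ξ]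
    have h1 : Real.exp (-t) ≤ Real.exp (-t * ‖ξ‖ ^ 2) :=
      Real.exp_le_exp.mpr (by nlinarith [mul_nonneg ht (sub_nonneg.mpr hsq)])
    calc A ^ 3 ^ 0 * alpha δ 0 t * W ξ = Real.exp (-t) * (A * W ξ) := by
          rw [halpha]; norm_num; ring
      _ ≤ Real.exp (-t * ‖ξ‖ ^ 2) * v₀ ξ := by
          apply mul_le_mul h1 (hv₀ge ξ) (mul_nonneg hA.le (hWnonneg ξ)) (Real.exp_nonneg _)
  | succ k IH =>
    intro t ht ξ
    by_cases hts : tTime δ (k + 1) ≤ t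
    swap
    · unfold alpha; rw [if_neg hts]; simp
    by_cases hWz : Wpow W (k + 1) ξ = 0
    · rw [hWz]; simp
    have hξn : ‖ξ‖ ≤ 3 ^ (k + 1) := by
      by_contra h
      push_neg at h
      exact hWz (hWpow_supp (k + 1) ξ h)
    set B : ℝ := ((3 : ℝ) ^ (k + 1)) ^ 2 with hB
    have hBpos : 0 < B := by positivity
    set p : ℝ := (3 : ℝ) ^ ((3 : ℝ) / 2 + (k : ℝ) - (3 : ℝ) ^ (k + 1) / 2) with hp
    set q : ℝ := cDelta δ ^ (((3 : ℝ) ^ k - 1) / 2) with hq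
    set K : ℝ := A ^ 3 ^ (k + 1) * (p * q) ^ 3 * Real.exp (-(3 : ℝ) ^ (k + 1) * t) with hK
    have hppos : 0 < p := Real.rpow_pos_of_pos (by norm_num) _
    have hqpos : 0 < q := Real.rpow_pos_of_pos hcd _
    have hKpos : 0 < K := by positivity
    have hstep : 0 < 4 * δ * ((3 : ℝ) ^ (2 * (k + 1)))⁻¹ := by positivity
    have htk1 : tTime δ k ≤ t := by
      rw [htsucc k] at hts; linarith
    have heq := hsol (t + 1) (by linarith) t ⟨ht, by linarith⟩ ξ
    rw [heq]
    refine le_trans ?_ (le_add_left le_rfl)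
    have hmono : ∫⁻ s in Set.Ioo (tTime δ k) t,
          ENNReal.ofReal (K * Real.exp (-(t - s) * B)) * Wpow W (k + 1) ξ
        ≤ ∫⁻ s in Set.Ioo (0 : ℝ) t,
            ENNReal.ofReal (Real.exp (-(t - s) * ‖ξ‖ ^ 2)) *
              lconv3 (fun y => ENNReal.ofReal (v s y)) ξ := by
      refine le_trans (setLIntegral_mono' measurableSet_Ioo ?_)
        (lintegral_mono_set (Set.Ioo_subset_Ioo (htnn k) le_rfl))
      intro s hs
      obtain ⟨hs1, hs2⟩ := hs
      have hs0 : (0:ℝ) ≤ s := le_trans (htnn k) hs1.le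
      have hIH := IH s hs0
      set cst : ENNReal := ENNReal.ofReal (A ^ 3 ^ k * alpha δ k s) with hcst
      have h1 : cst ^ 3 * Wpow W (k + 1) ξ ≤ lconv3 (fun y => ENNReal.ofReal (v s y)) ξ := by
        rw [show Wpow W (k + 1) = lconv3 (Wpow W k) from rfl,
          ← lconv3_smul cst ENNReal.ofReal_ne_top (Wpow W k) ξ]
        exact lconv3_mono hIH ξ
      have h2 : Real.exp (-(t - s) * B) ≤ Real.exp (-(t - s) * ‖ξ‖ ^ 2) := by
        apply Real.exp_le_exp.mpr
        have hb2 : ‖ξ‖ ^ 2 ≤ B := by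
          rw [hB]; exact pow_le_pow_left₀ (norm_nonneg ξ) hξn 2
        nlinarith
      have halphas : alpha δ k s = p * q * Real.exp (-(3 : ℝ) ^ k * s) := by
        unfold alpha; rw [if_pos hs1.le]
      have hcube : (A ^ 3 ^ k * alpha δ k s) ^ 3
          = A ^ 3 ^ (k + 1) * (p * q) ^ 3 * Real.exp (-(3 : ℝ) ^ (k + 1) * s) := by
        rw [halphas]
        have hA3 : (A ^ 3 ^ k) ^ 3 = A ^ 3 ^ (k + 1) := by rw [← pow_mul, ← pow_succ]
        have he : (Real.exp (-(3 : ℝ) ^ k * s)) ^ 3 = Real.exp (-(3 : ℝ) ^ (k + 1) * s) := by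
          rw [← Real.exp_nat_mul]
          congr 1
          rw [pow_succ]
          push_cast
          ring
        calc (A ^ 3 ^ k * (p * q * Real.exp (-(3 : ℝ) ^ k * s))) ^ 3
            = (A ^ 3 ^ k) ^ 3 * (p * q) ^ 3 * (Real.exp (-(3 : ℝ) ^ k * s)) ^ 3 := by ring
          _ = _ := by rw [hA3, he]
      have h3 : K ≤ (A ^ 3 ^ k * alpha δ k s) ^ 3 := by
        rw [hcube, hK]
        have : Real.exp (-(3 : ℝ) ^ (k + 1) * t) ≤ Real.exp (-(3 : ℝ) ^ (k + 1) * s) := by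
          apply Real.exp_le_exp.mpr
          have : (0:ℝ) < (3 : ℝ) ^ (k + 1) := by positivity
          nlinarith [hs2.le]
        have hpos : (0:ℝ) ≤ A ^ 3 ^ (k + 1) * (p * q) ^ 3 := by positivity
        nlinarith
      calc ENNReal.ofReal (K * Real.exp (-(t - s) * B)) * Wpow W (k + 1) ξ
          = ENNReal.ofReal (Real.exp (-(t - s) * B)) *
              (ENNReal.ofReal K * Wpow W (k + 1) ξ) := by
            rw [ENNReal.ofReal_mul hKpos.le]; ring
        _ ≤ ENNReal.ofReal (Real.exp (-(t - s) * ‖ξ‖ ^ 2)) *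
              (cst ^ 3 * Wpow W (k + 1) ξ) := by
            refine mul_le_mul' (ENNReal.ofReal_le_ofReal h2) (mul_le_mul_left ?_ _)
            rw [hcst, ← ENNReal.ofReal_pow (mul_nonneg (by positivity) (halpha_nonneg k s))]
            exact ENNReal.ofReal_le_ofReal h3
        _ ≤ _ := mul_le_mul_right h1 _
    refine le_trans ?_ hmono
    have hmeas : AEMeasurable (fun s : ℝ => ENNReal.ofReal (K * Real.exp (-(t - s) * B)))
        (volume.restrict (Set.Ioo (tTime δ k) t)) :=
      (ENNReal.continuous_ofReal.comp (by continuity)).measurable.aemeasurable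
    rw [lintegral_mul_const'' _ hmeas]
    apply mul_le_mul_left
    rw [lint_ofReal_Ioo htk1 (by continuity) (fun s => by positivity)]
    apply ENNReal.ofReal_le_ofReal
    rw [intervalIntegral.integral_const_mul, integral_exp_shift B t (tTime δ k) hBpos htk1]
    -- final arithmetic
    have hcle : cDelta δ ≤ 1 - Real.exp (-(t - tTime δ k) * B) := by
      unfold cDelta
      have hBinv : ((3 : ℝ) ^ (2 * (k + 1)))⁻¹ = B⁻¹ := by
        rw [hB, ← pow_mul]
        congr 1
        ring
      have h4 : 4 * δ ≤ (t - tTime δ k) * B := by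
        rw [htsucc k, hBinv] at hts
        have h5 : 4 * δ * B⁻¹ ≤ t - tTime δ k := by linarith
        calc 4 * δ = 4 * δ * B⁻¹ * B := by field_simp
          _ ≤ (t - tTime δ k) * B := by nlinarith
      have := Real.exp_le_exp.mpr (neg_le_neg h4)
      have h6 : Real.exp (-((t - tTime δ k) * B)) = Real.exp (-(t - tTime δ k) * B) := by
        ring_nf
      have h7 : Real.exp (-(4 * δ)) = Real.exp (-4 * δ) := by ring_nf
      rw [h6, h7] at this
      linarith
    have key : A ^ 3 ^ (k + 1) * alpha δ (k + 1) t = K * (cDelta δ / B) := by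
      unfold alpha
      rw [if_pos hts, hK]
      have hp3 : p ^ 3 / B = (3 : ℝ) ^ ((3 : ℝ) / 2 + ((k : ℝ) + 1) - (3 : ℝ) ^ (k + 1 + 1) / 2) := by
        rw [hp, hB, ← Real.rpow_natCast ((3 : ℝ) ^ ((3 : ℝ) / 2 + (k : ℝ) - (3 : ℝ) ^ (k + 1) / 2)) 3,
          ← Real.rpow_mul (by norm_num : (0:ℝ) ≤ 3),
          ← pow_mul, ← Real.rpow_natCast (3 : ℝ) ((k+1) * 2),
          ← Real.rpow_sub (by norm_num : (0:ℝ) < 3)]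
        congr 1
        push_cast
        rw [pow_succ (3:ℝ) (k+1)]
        ring
      have hq3 : q ^ 3 * cDelta δ = cDelta δ ^ (((3 : ℝ) ^ (k + 1) - 1) / 2) := by
        rw [hq, ← Real.rpow_natCast (cDelta δ ^ (((3 : ℝ) ^ k - 1) / 2)) 3,
          ← Real.rpow_mul hcd.le]
        nth_rewrite 2 [show cDelta δ = cDelta δ ^ (1:ℝ) from (Real.rpow_one _).symm]
        rw [← Real.rpow_add hcd]
        congr 1
        push_cast
        rw [pow_succ (3:ℝ) k]
        ring
      have hcast : ((k:ℝ) + 1) = ((k + 1 : ℕ) : ℝ) := by push_cast; ring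
      rw [← hq3, ← hcast, ← hp3]
      field_simp
    rw [key]
    gcongr
end
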